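/- arXiv:1706.09444 — 2 statements merged into one kernel-verified Lean document; each statement's English description precedes it below -/
import Mathlib

section
/- Let V and V' be finite-dimensional vector spaces over a field K, and let g and g' be endomorphisms of V and V'. If over an algebraic closure of K the characteristic polynomial of g factors as ∏_{i=1}^{n}(x − α_i) and that of g' as ∏_{j=1}^{n'}(x − α'_j), then the characteristic polynomial of g ⊗ g' on V ⊗ V' equals ∏_{i,j}(x − α_i α'_j). -/
/-!
Over an algebraically closed field every endomorphism has an upper triangular matrix in a suitable
basis: an eigenvector of the dual map cuts out an invariant hyperplane, and a triangular basis of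
that hyperplane followed by any vector outside it is again triangular. For triangular bases `b, b'`
of `V, V'` the matrix of `g ⊗ g'` in the basis `b ⊗ b'` is the Kronecker product, which is upper
triangular for the lexicographic order, with diagonal entries `αᵢ α'ⱼ`. Forming `g ⊗ g'` and its
characteristic polynomial commutes with base change, so it suffices to work over the algebraic
closure.
-/

open Polynomial Module Kronecker
open scoped TensorProduct

namespace Module.Basis

variable {R M : Type*} [CommRing R] [AddCommGroup M] [Module R M]

theorem repr_mkFinSnoc_coe {n : ℕ} {N : Submodule R M} (b : Basis (Fin n) R N) (y : M)
    (hli : ∀ (c : R), ∀ x ∈ N, c • y + x = 0 → c = 0) (hsp : ∀ z : M, ∃ c : R, z + c • y ∈ N)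
    (x : N) (i : Fin (n + 1)) :
    (mkFinSnoc b y hli hsp).repr x i = Fin.snoc (α := fun _ => R) (b.repr x) 0 i := by
  set b' := mkFinSnoc b y hli hsp
  have hx : (x : M) = ∑ i, Fin.snoc (α := fun _ => R) (b.repr x) 0 i • b' i := by
    simp only [b', coe_mkFinSnoc, Fin.sum_univ_castSucc, Fin.snoc_castSucc, Fin.snoc_last,
      zero_smul, add_zero, Function.comp_apply]
    exact_mod_cast (b.sum_repr x).symm
  rw [hx, b'.repr_sum_self]

end Module.Basis

namespace Module.End

variable {L V : Type*} [Field L] [IsAlgClosed L] [AddCommGroup V] [Module L V]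

theorem exists_basis_isUpperTriangular_toMatrix (n : ℕ) [FiniteDimensional L V]
    (hn : finrank L V = n) (f : End L V) :
    ∃ b : Basis (Fin n) L V, (LinearMap.toMatrix b b f).IsUpperTriangular := by
  induction n generalizing V with
  | zero => exact ⟨finBasisOfFinrankEq L V hn, fun i => i.elim0⟩
  | succ n ih =>
    have : Nontrivial V := nontrivial_of_finrank_eq_succ hn
    obtain ⟨μ, hμ⟩ := exists_eigenvalue f.dualMap
    obtain ⟨φ, hφ⟩ := hμ.exists_hasEigenvector
    have hN : ∀ x ∈ LinearMap.ker φ, f x ∈ LinearMap.ker φ := fun x hx => by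
      simpa [LinearMap.mem_ker.mp hx] using congrArg (· x) hφ.apply_eq_smul
    have hφN : finrank L (LinearMap.ker φ) = n :=
      Nat.add_right_cancel ((Dual.finrank_ker_add_one_of_ne_zero hφ.2).trans hn)
    obtain ⟨bN, hbN⟩ := ih hφN (f.restrict hN)
    obtain ⟨y, hy⟩ : ∃ y, φ y ≠ 0 := by
      by_contra! h
      exact hφ.2 (LinearMap.ext h)
    have hli : ∀ (c : L), ∀ x ∈ LinearMap.ker φ, c • y + x = 0 → c = 0 := by
      intro c x hx hcx
      have hcy : c * φ y = 0 := by simpa [LinearMap.mem_ker.mp hx] using congrArg φ hcx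
      exact (mul_eq_zero.mp hcy).resolve_right hy
    have hsp : ∀ z, ∃ c : L, z + c • y ∈ LinearMap.ker φ := fun z =>
      ⟨-(φ z / φ y), by simp [hy]⟩
    refine ⟨Basis.mkFinSnoc bN y hli hsp, fun i j hji => ?_⟩
    induction j using Fin.lastCases with
    | last => exact absurd hji (not_lt.mpr i.le_last)
    | cast j =>
      rw [LinearMap.toMatrix_apply, Basis.coe_mkFinSnoc, Fin.snoc_castSucc, Function.comp_apply,
        show f (bN j) = (f.restrict hN (bN j) : V) from rfl, Basis.repr_mkFinSnoc_coe]
      induction i using Fin.lastCases with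
      | last => simp
      | cast i =>
        rw [Fin.snoc_castSucc, ← LinearMap.toMatrix_apply]
        exact hbN (Fin.castSucc_lt_castSucc_iff.mp hji)

end Module.End

theorem Polynomial.roots_prod_X_sub_C_eq_map {R ι : Type*} [CommRing R] [IsDomain R]
    (s : Finset ι) (f : ι → R) : (∏ i ∈ s, (X - C (f i))).roots = s.val.map f := by
  rw [Finset.prod_eq_multiset_prod, ← roots_multiset_prod_X_sub_C (s.val.map f), Multiset.map_map]
  rfl

namespace Matrix

variable {R m n : Type*} [LinearOrder m] [LinearOrder n]

theorem IsUpperTriangular.reindex_toLex_kronecker [CommRing R] {A : Matrix m m R}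
    {B : Matrix n n R} (hA : A.IsUpperTriangular) (hB : B.IsUpperTriangular) :
    (reindex toLex toLex (A ⊗ₖ B)).IsUpperTriangular := by
  rintro ⟨i, i'⟩ ⟨j, j'⟩ h
  rcases Prod.Lex.lt_iff.mp h with h | ⟨rfl, h⟩
  · exact mul_eq_zero_of_left (hA h) _
  · exact mul_eq_zero_of_right _ (hB h)

theorem IsUpperTriangular.charpoly_kronecker [Fintype m] [Fintype n] [CommRing R]
    {A : Matrix m m R} {B : Matrix n n R} (hA : A.IsUpperTriangular) (hB : B.IsUpperTriangular) :
    (A ⊗ₖ B).charpoly = ∏ p : m × n, (X - C (A p.1 p.1 * B p.2 p.2)) := by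
  rw [← charpoly_reindex toLex, charpoly_of_isUpperTriangular _ (hA.reindex_toLex_kronecker hB)]
  exact Fintype.prod_equiv toLex.symm _ _ fun _ => rfl

theorem IsUpperTriangular.roots_charpoly [Fintype m] [CommRing R] [IsDomain R]
    {A : Matrix m m R} (hA : A.IsUpperTriangular) :
    A.charpoly.roots = Finset.univ.val.map A.diag := by
  rw [charpoly_of_isUpperTriangular _ hA, Polynomial.roots_prod_X_sub_C_eq_map]
  rfl

theorem IsUpperTriangular.roots_charpoly_kronecker [Fintype m] [Fintype n] [CommRing R]
    [IsDomain R] {A : Matrix m m R} {B : Matrix n n R} (hA : A.IsUpperTriangular)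
    (hB : B.IsUpperTriangular) :
    (A ⊗ₖ B).charpoly.roots = A.charpoly.roots.bind fun a => B.charpoly.roots.map (a * ·) := by
  rw [hA.charpoly_kronecker hB, Polynomial.roots_prod_X_sub_C_eq_map, hA.roots_charpoly,
    hB.roots_charpoly, ← Finset.univ_product_univ, Finset.product_val]
  simp only [SProd.sprod, Multiset.product, Multiset.map_bind, Multiset.bind_map, Multiset.map_map]
  rfl

end Matrix

theorem LinearMap.roots_charpoly_tensorProduct_map {L V V' : Type*} [Field L] [IsAlgClosed L]
    [AddCommGroup V] [Module L V] [FiniteDimensional L V]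
    [AddCommGroup V'] [Module L V'] [FiniteDimensional L V'] (f : End L V) (f' : End L V') :
    (TensorProduct.map f f').charpoly.roots =
      f.charpoly.roots.bind fun a => f'.charpoly.roots.map (a * ·) := by
  obtain ⟨b, hb⟩ := End.exists_basis_isUpperTriangular_toMatrix _ rfl f
  obtain ⟨b', hb'⟩ := End.exists_basis_isUpperTriangular_toMatrix _ rfl f'
  rw [← (TensorProduct.map f f').charpoly_toMatrix (b.tensorProduct b'),
    TensorProduct.toMatrix_map, ← f.charpoly_toMatrix b, ← f'.charpoly_toMatrix b']
  exact hb.roots_charpoly_kronecker hb'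

theorem TensorProduct.charpoly_map_baseChange {R A M N : Type*} [CommRing R] [CommRing A]
    [Algebra R A] [AddCommGroup M] [Module R M] [Module.Free R M] [Module.Finite R M]
    [AddCommGroup N] [Module R N] [Module.Free R N] [Module.Finite R N]
    (f : End R M) (g : End R N) :
    LinearMap.charpoly (M := A ⊗[R] M ⊗[A] (A ⊗[R] N)) (map (f.baseChange A) (g.baseChange A)) =
      (map f g).charpoly.map (algebraMap R A) := by
  let b := Free.chooseBasis R M
  let c := Free.chooseBasis R N
  rw [← (map f g).charpoly_toMatrix (b.tensorProduct c), ← Matrix.charpoly_map,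
    ← LinearMap.charpoly_toMatrix _ ((Algebra.TensorProduct.basis A b).tensorProduct
      (Algebra.TensorProduct.basis A c)),
    toMatrix_map, toMatrix_map, LinearMap.toMatrix_baseChange, LinearMap.toMatrix_baseChange]
  congr 1
  ext ⟨i, j⟩ ⟨k, l⟩
  simp

/-- Let `V` and `V'` be finite-dimensional vector spaces over a field `K`,
and let `g` and `g'` be endomorphisms of `V` and `V'`. If over an algebraic closure of `K`
the characteristic polynomial of `g` factors as `∏ᵢ (X - αᵢ)` and that of `g'` as
`∏ⱼ (X - α'ⱼ)`, then the characteristic polynomial of `g ⊗ g'` on `V ⊗ V'` equals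
`∏_{i,j} (X - αᵢ α'ⱼ)`. -/
theorem charpoly_tensorProduct_map
    (K : Type) [Field K]
    (V V' : Type) [AddCommGroup V] [Module K V] [AddCommGroup V'] [Module K V']
    [FiniteDimensional K V] [FiniteDimensional K V']
    (g : V →ₗ[K] V) (g' : V' →ₗ[K] V')
    (α α' : Multiset (AlgebraicClosure K))
    (hα : g.charpoly.map (algebraMap K (AlgebraicClosure K))
        = (α.map fun a => X - C a).prod)
    (hα' : g'.charpoly.map (algebraMap K (AlgebraicClosure K))
        = (α'.map fun b => X - C b).prod) :
    (TensorProduct.map g g').charpoly.map (algebraMap K (AlgebraicClosure K))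
      = (α.bind fun a => α'.map fun b => X - C (a * b)).prod := by
  rw [← LinearMap.charpoly_baseChange] at hα hα'
  have hroots : α = (g.baseChange (AlgebraicClosure K)).charpoly.roots := by
    rw [hα, roots_multiset_prod_X_sub_C]
  have hroots' : α' = (g'.baseChange (AlgebraicClosure K)).charpoly.roots := by
    rw [hα', roots_multiset_prod_X_sub_C]
  rw [← TensorProduct.charpoly_map_baseChange,
    (IsAlgClosed.splits _).eq_prod_roots_of_monic (LinearMap.charpoly_monic _),
    LinearMap.roots_charpoly_tensorProduct_map, ← hroots, ← hroots', Multiset.map_bind]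
  simp only [Multiset.map_map, Function.comp_def]
end

section
/- Let K and L be fields of characteristic 0, V₁ and V₂ two finite-dimensional semisimple representations of a group Γ over K. If tr(ρ₁(γ)) = tr(ρ₂(γ)) for all γ ∈ Γ, then V₁ ≅ V₂ as Γ-representations. -/
/-!
Let `A` be a `K`-algebra and `M`, `N` finite-dimensional semisimple `A`-modules with the same
character. The character determines the annihilator: in the semisimple quotient
`A ⧸ ann (M × N)` the left ideal coming from `ann N` is generated by an idempotent, so some
`a ∈ ann N` acts on `M` as an idempotent of trace `χ_M a = χ_N a = 0`, hence as `0` in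
characteristic zero, and every element of `ann N` acts on `M` through `a`. A simple submodule `T`
of `M` is then a quotient of `A ⧸ ann N`, which embeds into a finite power of `N`, so `T` embeds
into `N`. Splitting `T` off both sides and inducting on the dimension gives `M ≅ N`; for
`A = K[Γ]` the characters agree because they are linear and agree on `Γ`.
-/

open LinearMap Module

section Ring

variable {A M N : Type*} [Ring A] [AddCommGroup M] [Module A M] [AddCommGroup N] [Module A N]

instance IsSemisimpleModule.prod [IsSemisimpleModule A M] [IsSemisimpleModule A N] :
    IsSemisimpleModule A (M × N) := by
  rw [← Submodule.topEquiv.isSemisimpleModule_iff, ← LinearMap.sup_range_inl_inr]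
  exact .sup (.range _) (.range _)

theorem Submodule.exists_mem_forall_sub_mul_mem (J I : Submodule A A)
    [IsSemisimpleModule A (A ⧸ J)] : ∃ a ∈ I, ∀ x ∈ I, x - x * a ∈ J := by
  obtain ⟨C, hC⟩ := ComplementedLattice.exists_isCompl (I.map J.mkQ)
  obtain ⟨_, ⟨a, ha, rfl⟩, c, hc, hac⟩ :=
    mem_sup.mp (hC.codisjoint.eq_top ▸ mem_top : J.mkQ 1 ∈ I.map J.mkQ ⊔ C)
  refine ⟨a, ha, fun x hx => ?_⟩
  have hxc : x • c = J.mkQ (x - x * a) := by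
    rw [eq_sub_of_add_eq' hac, smul_sub, ← map_smul, ← map_smul, ← map_sub, smul_eq_mul,
      smul_eq_mul, mul_one]
  have hmem : x • c ∈ I.map J.mkQ ⊓ C :=
    ⟨hxc ▸ mem_map_of_mem (I.sub_mem hx (I.smul_mem x ha)), C.smul_mem x hc⟩
  rwa [hC.inf_eq_bot, mem_bot, hxc, mkQ_apply, Quotient.mk_eq_zero] at hmem

theorem LinearMap.exists_proj_comp_ne_zero {ι : Type*} {P : ι → Type*}
    [∀ i, AddCommGroup (P i)] [∀ i, Module A (P i)] {f : M →ₗ[A] Π i, P i} (hf : f ≠ 0) :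
    ∃ i, proj i ∘ₗ f ≠ 0 := by
  by_contra! h
  exact hf (LinearMap.ext fun m => funext fun i => congr($(h i) m))

end Ring

section Algebra

variable (K : Type*) {A M N : Type*} [Field K] [Ring A] [Algebra K A]
  [AddCommGroup M] [Module A M] [Module K M] [IsScalarTower K A M]
  [AddCommGroup N] [Module A N] [Module K N] [IsScalarTower K A N]

instance Submodule.finiteDimensional_of_isScalarTower [FiniteDimensional K M]
    (p : Submodule A M) : FiniteDimensional K p :=
  .of_injective (p.subtype.restrictScalars K) Subtype.val_injective

variable (A M) in
noncomputable def Module.character : A →ₗ[K] K :=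
  trace K M ∘ₗ (Algebra.lsmul K K M : A →ₐ[K] Module.End K M).toLinearMap

theorem Module.character_apply (a : A) :
    character K A M a = trace K M (Algebra.lsmul K K M a) := rfl

theorem Module.character_one [FiniteDimensional K M] : character K A M 1 = finrank K M := by
  rw [character_apply, map_one, trace_one]

theorem LinearEquiv.character_eq (e : M ≃ₗ[A] N) : character K A M = character K A N := by
  ext a
  rw [character_apply, character_apply, ← trace_conj' _ (e.restrictScalars K)]
  congr 1
  ext n
  simp

theorem Module.character_prod [FiniteDimensional K M] [FiniteDimensional K N] :
    character K A (M × N) = character K A M + character K A N := by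
  ext a
  rw [LinearMap.add_apply, character_apply, character_apply, character_apply, ← trace_prodMap']
  rfl

theorem Module.annihilator_eq_ker_pi {ι : Type*} (b : Basis ι K N) :
    annihilator A N = ker (LinearMap.pi fun i => toSpanSingleton A N (b i)) := by
  ext a
  simp only [mem_annihilator, mem_ker, funext_iff, pi_apply, toSpanSingleton_apply, Pi.zero_apply]
  refine ⟨fun h i => h _, fun h n => ?_⟩
  have : Algebra.lsmul K K N a = 0 := b.ext h
  exact congr($this n)

theorem Module.isSemisimpleModule_quotient_annihilator [FiniteDimensional K N]
    [IsSemisimpleModule A N] : IsSemisimpleModule A (A ⧸ annihilator A N) := by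
  rw [annihilator_eq_ker_pi K (Module.finBasis K N)]
  exact .congr (LinearMap.quotKerEquivRange _)

theorem IsSimpleModule.exists_submodule_linearEquiv_of_annihilator_le [FiniteDimensional K N]
    [IsSemisimpleModule A N] (T : Type*) [AddCommGroup T] [Module A T] [IsSimpleModule A T]
    (h : annihilator A N ≤ annihilator A T) :
    ∃ S : Submodule A N, Nonempty (T ≃ₗ[A] S) := by
  have := IsSimpleModule.nontrivial A T
  obtain ⟨t, ht⟩ := exists_ne (0 : T)
  set φ := LinearMap.pi fun i => toSpanSingleton A N (Module.finBasis K N i)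
  rw [annihilator_eq_ker_pi K (Module.finBasis K N)] at h
  have hker : ker φ ≤ ker (toSpanSingleton A T t) := fun a ha => mem_annihilator.mp (h ha) t
  set g : range φ →ₗ[A] T := (ker φ).liftQ _ hker ∘ₗ φ.quotKerEquivRange.symm.toLinearMap
  have hg : g ≠ 0 := fun hg0 => ht <| by
    simpa [g] using congr($hg0 (φ.quotKerEquivRange (Submodule.Quotient.mk 1)))
  obtain ⟨S, ⟨e⟩⟩ := linearEquiv_of_ne_zero hg
  have hinj : Function.Injective ((range φ).subtype ∘ₗ S.subtype ∘ₗ e.toLinearMap) := by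
    simpa using e.injective
  obtain ⟨i, hi⟩ := exists_proj_comp_ne_zero (ne_zero_of_injective hinj)
  exact ⟨range _, ⟨.ofInjective _ (injective_of_ne_zero hi)⟩⟩

end Algebra

section CharZero

variable (K : Type*) {A M N : Type*} [Field K] [CharZero K] [Ring A] [Algebra K A]
  [AddCommGroup M] [Module A M] [Module K M] [IsScalarTower K A M] [FiniteDimensional K M]
  [IsSemisimpleModule A M]
  [AddCommGroup N] [Module A N] [Module K N] [IsScalarTower K A N] [FiniteDimensional K N]
  [IsSemisimpleModule A N]

theorem Module.annihilator_le_of_character_eq (h : character K A M = character K A N) :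
    annihilator A N ≤ annihilator A M := by
  have := isSemisimpleModule_quotient_annihilator K (A := A) (N := M × N)
  obtain ⟨a, ha, hsub⟩ :=
    Submodule.exists_mem_forall_sub_mul_mem (annihilator A (M × N)) (annihilator A N)
  have hsubM : ∀ x ∈ annihilator A N, ∀ m : M, (x - x * a) • m = 0 := fun x hx =>
    mem_annihilator.mp ((inl A M N).annihilator_le_of_injective inl_injective (hsub x hx))
  have hidem : IsIdempotentElem (Algebra.lsmul K K M a) := LinearMap.ext fun m => by
    rw [Module.End.mul_apply, Algebra.lsmul_apply, Algebra.lsmul_apply, ← mul_smul, eq_comm,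
      ← sub_eq_zero, ← sub_smul]
    exact hsubM a ha m
  have hzeroN : Algebra.lsmul K K N a = 0 := LinearMap.ext (mem_annihilator.mp ha)
  have hzeroM : Algebra.lsmul K K M a = 0 := hidem.eq_zero_of_trace_eq_zero <| by
    rw [← character_apply, h, character_apply, hzeroN, map_zero]
  intro x hx
  refine mem_annihilator.mpr fun m => ?_
  have ham : a • m = 0 := congr($hzeroM m)
  rw [← sub_add_cancel x (x * a), add_smul, hsubM x hx, mul_smul, ham, smul_zero, zero_add]

theorem Module.nonempty_linearEquiv_of_character_eq (h : character K A M = character K A N) :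
    Nonempty (M ≃ₗ[A] N) := by
  induction hn : finrank K M using Nat.strong_induction_on generalizing M N with
  | _ n ih =>
    rcases subsingleton_or_nontrivial M with hM | hM
    · have : Subsingleton N := by
        rw [← finrank_zero_iff (R := K), ← Nat.cast_eq_zero (R := K),
          ← character_one K (A := A), ← h, character_one, finrank_zero_of_subsingleton,
          Nat.cast_zero]
      exact ⟨.ofSubsingleton _ _⟩
    obtain ⟨T, hT⟩ := IsSemisimpleModule.exists_simple_submodule A M
    obtain ⟨R, ⟨eTR⟩⟩ := IsSimpleModule.exists_submodule_linearEquiv_of_annihilator_le K T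
      ((annihilator_le_of_character_eq K h).trans
        (T.subtype.annihilator_le_of_injective Subtype.val_injective))
    obtain ⟨T', hT'⟩ := ComplementedLattice.exists_isCompl T
    obtain ⟨R', hR'⟩ := ComplementedLattice.exists_isCompl R
    let eM := (Submodule.prodEquivOfIsCompl T T' hT').symm
    let eN := (Submodule.prodEquivOfIsCompl R R' hR').symm
    have hχ : character K A T' = character K A R' := by
      have := h
      rw [eM.character_eq K, eN.character_eq K, character_prod, character_prod,
        eTR.character_eq K] at this
      exact add_left_cancel this
    have hdim : finrank K T' < n := by
      have := IsSimpleModule.nontrivial A T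
      have : 0 < finrank K T := finrank_pos
      rw [← hn, (eM.restrictScalars K).finrank_eq, finrank_prod]
      omega
    obtain ⟨e'⟩ := ih _ hdim hχ rfl
    exact ⟨eM.trans ((eTR.prodCongr e').trans eN.symm)⟩

end CharZero

theorem Module.character_asModule_of {K G V : Type*} [Field K] [Monoid G] [AddCommGroup V]
    [Module K V] [FiniteDimensional K V] (ρ : Representation K G V) (g : G) :
    character K (MonoidAlgebra K G) ρ.asModule (MonoidAlgebra.of K G g) = ρ.character g := by
  rw [character_apply, Representation.character, ← trace_conj' (ρ g) ρ.asModuleEquiv.symm]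
  congr 1
  ext v
  exact (ρ.asModuleEquiv_symm_map_rho g _).symm

/-- Let `K` be a field of characteristic `0` and let `V₁`, `V₂` be two
finite-dimensional semisimple representations of a group `Γ` over `K`.  If
`tr (ρ₁ γ) = tr (ρ₂ γ)` for all `γ ∈ Γ`, then `V₁ ≅ V₂` as `Γ`-representations. -/
theorem semisimple_reps_iso_of_trace_eq
    (K : Type) [Field K] [CharZero K] (Γ : Type) [Group Γ]
    (V₁ V₂ : Type) [AddCommGroup V₁] [Module K V₁] [AddCommGroup V₂] [Module K V₂]
    [FiniteDimensional K V₁] [FiniteDimensional K V₂]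
    (ρ₁ : Representation K Γ V₁) (ρ₂ : Representation K Γ V₂)
    (h₁ : IsSemisimpleModule (MonoidAlgebra K Γ) ρ₁.asModule)
    (h₂ : IsSemisimpleModule (MonoidAlgebra K Γ) ρ₂.asModule)
    (htr : ∀ γ : Γ, LinearMap.trace K V₁ (ρ₁ γ) = LinearMap.trace K V₂ (ρ₂ γ)) :
    ∃ e : V₁ ≃ₗ[K] V₂, ∀ (γ : Γ) (v : V₁), e (ρ₁ γ v) = ρ₂ γ (e v) := by
  have hχ : character K (MonoidAlgebra K Γ) ρ₁.asModule
      = character K (MonoidAlgebra K Γ) ρ₂.asModule := by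
    ext γ
    simp only [LinearMap.comp_apply, MonoidAlgebra.lsingle_apply, ← MonoidAlgebra.of_apply,
      character_asModule_of]
    exact htr γ
  obtain ⟨E⟩ := nonempty_linearEquiv_of_character_eq K hχ
  let f := (Representation.IntertwiningMap.equivLinearMapAsModule ρ₁ ρ₂).symm E.toLinearMap
  exact ⟨.ofBijective f.toLinearMap E.bijective, f.isIntertwining⟩
end
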